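/- Let D = (V,A) be a digraph whose underlying graph (obtained by forgetting arc directions) is a forest, i.e., contains no cycle. Then, as an identity in the field of rational functions in q, y, z: B_D(−q, y, z) = (−1)^{|V|} · (y+z−1)^{|A|} · B_D(q, y/(y+z−1), z/(y+z−1)). -/

import Mathlib

/-!
Write the colouring sum as `∑_f ∏_arcs arcWeight ∏_v P v n (f v)`, where the vertex weight
`P v n c` is a polynomial function of the number `n` of colours and the colour `c`; `B_D` is the
case `P = 1`. Summing out the colour of a leaf multiplies the weight of its neighbour by
`leafWeight`, which is again polynomial because discrete partial sums of polynomials are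
polynomials. Removing leaves one at a time shows that the sum is a polynomial in `n`.

Reciprocity comes from the discrete sums: if `G` is the partial sum of `F` in the colour variable,
then `G (-n) (-m) = -G' n m`, where `G'` is the partial sum of the reflected weight
`F' n c = F (-n) (-1 - c)`. The reflected leaf weight for `(y, z)` is `-(y + z - 1)` times the leaf
weight for `(y / (y + z - 1), z / (y + z - 1))`, so every arc contributes a factor `y + z - 1`
and every vertex a sign.
-/

open Finset

/-- The sum over all `q`-colorings of a digraph of
`y ^ (number of ascents) * z ^ (number of descents)`. -/
def colorSum (V A : Type) [Fintype V] [DecidableEq V] [Fintype A]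
    (s t : A → V) (q : ℕ) (y z : ℚ) : ℚ :=
  ∑ f : V → Fin q,
    y ^ (Finset.univ.filter (fun a => f (s a) < f (t a))).card *
    z ^ (Finset.univ.filter (fun a => f (t a) < f (s a))).card

/-- The graph underlying the digraph (arc directions forgotten) contains a cycle,
i.e. there is a closed walk of positive length using pairwise distinct edges. -/
def UnderlyingHasCycle {V A : Type} (s t : A → V) : Prop :=
  ∃ n : ℕ, 0 < n ∧ ∃ (e : ZMod n → A) (v : ZMod n → V),
    Function.Injective e ∧
    ∀ i, (s (e i) = v i ∧ t (e i) = v (i + 1)) ∨ (t (e i) = v i ∧ s (e i) = v (i + 1))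

open Polynomial

def polyFun₁ : Subalgebra ℚ (ℚ → ℚ) := Algebra.adjoin ℚ {id}

def polyFun₂ : Subalgebra ℚ (ℚ → ℚ → ℚ) := Algebra.adjoin ℚ {fun a _ => a, fun _ b => b}

namespace polyFun₁

theorem id_mem : id ∈ polyFun₁ := Algebra.subset_adjoin rfl

theorem exists_polynomial {f : ℚ → ℚ} (hf : f ∈ polyFun₁) : ∃ p : ℚ[X], ∀ x, f x = p.eval x := by
  induction hf using Algebra.adjoin_induction with
  | mem f hf => exact ⟨X, by simp [Set.mem_singleton_iff.mp hf]⟩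
  | algebraMap r => exact ⟨C r, by simp⟩
  | add f g _ _ hf hg =>
    obtain ⟨p, hp⟩ := hf; obtain ⟨q, hq⟩ := hg
    exact ⟨p + q, by simp [hp, hq]⟩
  | mul f g _ _ hf hg =>
    obtain ⟨p, hp⟩ := hf; obtain ⟨q, hq⟩ := hg
    exact ⟨p * q, by simp [hp, hq]⟩

theorem eq_of_forall_pos_nat {f g : ℚ → ℚ} (hf : f ∈ polyFun₁) (hg : g ∈ polyFun₁)
    (h : ∀ n : ℕ, 0 < n → f n = g n) : f = g := by
  obtain ⟨p, hp⟩ := exists_polynomial (sub_mem hf hg)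
  have hp0 : p = 0 := by
    refine eq_zero_of_infinite_isRoot p (Set.infinite_of_injective_forall_mem
      (f := fun n : ℕ => (n + 1 : ℚ)) (fun m n hmn => by simpa using hmn) fun n => ?_)
    have := h (n + 1) n.succ_pos
    simp_all [← hp]
  funext x
  simpa [hp0, sub_eq_zero] using hp x

theorem mvPolynomial_eval_mem {σ : Type*} (B : MvPolynomial σ ℚ) {x : ℚ → σ → ℚ}
    (hx : ∀ i, (fun r => x r i) ∈ polyFun₁) : (fun r => MvPolynomial.eval (x r) B) ∈ polyFun₁ := by
  induction B using MvPolynomial.induction_on with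
  | C a =>
    simp only [MvPolynomial.eval_C]
    exact Subalgebra.algebraMap_mem polyFun₁ a
  | add p q hp hq =>
    simp only [map_add]
    exact add_mem hp hq
  | mul_X p i hp =>
    simp only [map_mul, MvPolynomial.eval_X]
    exact mul_mem hp (hx i)

end polyFun₁

namespace polyFun₂

theorem fst_mem : (fun a _ => a) ∈ polyFun₂ := Algebra.subset_adjoin (by simp)

theorem snd_mem : (fun _ b => b) ∈ polyFun₂ := Algebra.subset_adjoin (by simp)

theorem comp_mem {F g h : ℚ → ℚ → ℚ} (hF : F ∈ polyFun₂) (hg : g ∈ polyFun₂)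
    (hh : h ∈ polyFun₂) : (fun a b => F (g a b) (h a b)) ∈ polyFun₂ := by
  induction hF using Algebra.adjoin_induction with
  | mem F hF => rcases hF with rfl | rfl <;> assumption
  | algebraMap r => exact Subalgebra.algebraMap_mem _ r
  | add F G _ _ hF hG => exact add_mem hF hG
  | mul F G _ _ hF hG => exact mul_mem hF hG

theorem comp_mem_polyFun₁ {F : ℚ → ℚ → ℚ} {g h : ℚ → ℚ} (hF : F ∈ polyFun₂)
    (hg : g ∈ polyFun₁) (hh : h ∈ polyFun₁) : (fun r => F (g r) (h r)) ∈ polyFun₁ := by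
  induction hF using Algebra.adjoin_induction with
  | mem F hF => rcases hF with rfl | rfl <;> assumption
  | algebraMap r => exact Subalgebra.algebraMap_mem _ r
  | add F G _ _ hF hG => exact add_mem hF hG
  | mul F G _ _ hF hG => exact mul_mem hF hG

theorem polynomial_eval_mem (p : ℚ[X]) : (fun _ b => p.eval b) ∈ polyFun₂ := by
  induction p using Polynomial.induction_on' with
  | add p q hp hq =>
    simp only [eval_add]
    exact add_mem hp hq
  | monomial n c =>
    simp only [eval_monomial]
    exact mul_mem (Subalgebra.algebraMap_mem polyFun₂ c) (pow_mem snd_mem n)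

theorem eq_of_forall_nat {F G : ℚ → ℚ → ℚ} (hF : F ∈ polyFun₂) (hG : G ∈ polyFun₂)
    (h : ∀ m k : ℕ, F m k = G m k) : F = G := by
  have hrow (m : ℕ) : F m = G m :=
    polyFun₁.eq_of_forall_pos_nat
      (comp_mem_polyFun₁ hF (Subalgebra.algebraMap_mem _ (m : ℚ)) polyFun₁.id_mem)
      (comp_mem_polyFun₁ hG (Subalgebra.algebraMap_mem _ (m : ℚ)) polyFun₁.id_mem)
      fun k _ => h m k
  funext a b
  exact congrFun (polyFun₁.eq_of_forall_pos_nat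
    (comp_mem_polyFun₁ hF polyFun₁.id_mem (Subalgebra.algebraMap_mem _ b))
    (comp_mem_polyFun₁ hG polyFun₁.id_mem (Subalgebra.algebraMap_mem _ b))
    fun m _ => congrFun (hrow m) b) a

end polyFun₂

theorem exists_eval_eq_sum_range_pow (j : ℕ) :
    ∃ p : ℚ[X], ∀ m : ℕ, p.eval (m : ℚ) = ∑ k ∈ range m, (k : ℚ) ^ j :=
  ⟨C ((j : ℚ) + 1)⁻¹ * (Polynomial.bernoulli (j + 1) - C (_root_.bernoulli (j + 1))), fun m => by
    rw [eval_mul, eval_C, eval_sub, eval_C, ← sum_range_pow_eq_bernoulli_sub]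
    field_simp⟩

def IsPartialSum (F G : ℚ → ℚ → ℚ) : Prop :=
  ∀ (a : ℚ) (m : ℕ), G a m = ∑ k ∈ range m, F a k

theorem polyFun₂.exists_isPartialSum {F : ℚ → ℚ → ℚ} (hF : F ∈ polyFun₂) :
    ∃ G ∈ polyFun₂, IsPartialSum F G := by
  rw [← Subalgebra.mem_toSubmodule, polyFun₂, Algebra.adjoin_eq_span] at hF
  induction hF using Submodule.span_induction with
  | mem F hF =>
    obtain ⟨i, j, rfl⟩ := (Submonoid.mem_closure_pair _ _ _).mp hF
    obtain ⟨p, hp⟩ := exists_eval_eq_sum_range_pow j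
    refine ⟨fun a b => a ^ i * p.eval b,
      mul_mem (pow_mem fst_mem i) (polynomial_eval_mem p), fun a m => ?_⟩
    simp [hp, mul_sum]
  | zero => exact ⟨0, zero_mem _, fun a m => by simp⟩
  | add F F' _ _ hF hF' =>
    obtain ⟨G, hG, hFG⟩ := hF
    obtain ⟨G', hG', hFG'⟩ := hF'
    exact ⟨G + G', add_mem hG hG', fun a m => by simp [hFG a m, hFG' a m, sum_add_distrib]⟩
  | smul c F _ hF =>
    obtain ⟨G, hG, hFG⟩ := hF
    exact ⟨c • G, Subalgebra.smul_mem _ hG c, fun a m => by simp [hFG a m, mul_sum]⟩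

def IsReflection (F F' : ℚ → ℚ → ℚ) : Prop :=
  ∀ a b, F (-a) (-1 - b) = F' a b

namespace IsPartialSum

variable {F G : ℚ → ℚ → ℚ}

theorem add_one (hF : F ∈ polyFun₂) (hG : G ∈ polyFun₂) (hFG : IsPartialSum F G) (a b : ℚ) :
    G a (b + 1) = G a b + F a b := by
  have key : (fun a b => G a (b + 1)) = fun a b => G a b + F a b :=
    polyFun₂.eq_of_forall_nat
      (polyFun₂.comp_mem hG polyFun₂.fst_mem (add_mem polyFun₂.snd_mem (one_mem _)))
      (add_mem hG hF) fun m k => by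
        rw [← Nat.cast_succ, hFG, hFG, sum_range_succ]
  exact congrFun (congrFun key a) b

theorem apply_neg_neg {F' G' : ℚ → ℚ → ℚ} (hF : F ∈ polyFun₂) (hG : G ∈ polyFun₂)
    (hFG : IsPartialSum F G) (hG' : G' ∈ polyFun₂) (hFG' : IsPartialSum F' G')
    (hFF' : IsReflection F F') (a b : ℚ) :
    G (-a) (-b) = -G' a b := by
  have hgrid (m k : ℕ) : G (-m) (-k) = -∑ i ∈ range k, F' m i := by
    induction k with
    | zero => simpa using hFG (-m) 0
    | succ k ih =>
      have := add_one hF hG hFG (-m) (-(k + 1))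
      rw [show -((k : ℚ) + 1) + 1 = -k by ring, ih, show -((k : ℚ) + 1) = -1 - k by ring,
        hFF'] at this
      rw [Nat.cast_succ, show -((k : ℚ) + 1) = -1 - k by ring, sum_range_succ]
      linarith
  have key : (fun a b => G (-a) (-b)) = fun a b => -G' a b :=
    polyFun₂.eq_of_forall_nat (polyFun₂.comp_mem hG (neg_mem polyFun₂.fst_mem)
      (neg_mem polyFun₂.snd_mem)) (neg_mem hG') fun m k => by rw [hgrid, hFG']
  exact congrFun (congrFun key a) b

end IsPartialSum

def arcWeight {α : Type*} [LinearOrder α] (y z : ℚ) (i j : α) : ℚ :=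
  if i < j then y else if j < i then z else 1

theorem arcWeight_swap {α : Type*} [LinearOrder α] (y z : ℚ) (i j : α) :
    arcWeight z y j i = arcWeight y z i j := by
  rcases lt_trichotomy i j with h | rfl | h <;> simp [arcWeight, *, not_lt_of_gt]

theorem arcWeight_eq_pow_mul_pow {α : Type*} [LinearOrder α] (y z : ℚ) (i j : α) :
    arcWeight y z i j = y ^ (if i < j then 1 else 0) * z ^ (if j < i then 1 else 0) := by
  rcases lt_trichotomy i j with h | h | h <;> simp [arcWeight, *, not_lt_of_gt]

theorem StrictMono.arcWeight_apply {α β : Type*} [LinearOrder α] [LinearOrder β] {f : α → β}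
    (hf : StrictMono f) (y z : ℚ) (i j : α) : arcWeight y z (f i) (f j) = arcWeight y z i j := by
  simp [arcWeight, hf.lt_iff_lt]

def leafWeight (y z : ℚ) (F G : ℚ → ℚ → ℚ) : ℚ → ℚ → ℚ :=
  fun a b => z * G a b + F a b + y * (G a a - G a (b + 1))

theorem leafWeight_mem {F G : ℚ → ℚ → ℚ} (hF : F ∈ polyFun₂) (hG : G ∈ polyFun₂) (y z : ℚ) :
    leafWeight y z F G ∈ polyFun₂ := by
  have hdiag : (fun a _ => G a a) ∈ polyFun₂ :=
    polyFun₂.comp_mem hG polyFun₂.fst_mem polyFun₂.fst_mem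
  have hshift : (fun a b => G a (b + 1)) ∈ polyFun₂ :=
    polyFun₂.comp_mem hG polyFun₂.fst_mem (add_mem polyFun₂.snd_mem (one_mem _))
  exact add_mem (add_mem (Subalgebra.smul_mem _ hG z) hF)
    (Subalgebra.smul_mem _ (sub_mem hdiag hshift) y)

theorem sum_arcWeight_mul {F G : ℚ → ℚ → ℚ} (hFG : IsPartialSum F G) (y z : ℚ) {n : ℕ}
    (i : Fin n) : ∑ j : Fin n, arcWeight y z i j * F n j = leafWeight y z F G n i := by
  have hi : (i : ℕ) + 1 ≤ n := i.isLt
  simp_rw [← Fin.val_strictMono.arcWeight_apply y z i]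
  rw [Fin.sum_univ_eq_sum_range (fun j => arcWeight y z (i : ℕ) j * F n j),
    ← sum_range_add_sum_Ico _ hi, sum_range_succ]
  have hbelow : ∑ j ∈ range i, arcWeight y z (i : ℕ) j * F n j = z * G n i := by
    rw [hFG, mul_sum]
    refine sum_congr rfl fun j hj => ?_
    rw [arcWeight, if_neg (by simp at hj; omega), if_pos (by simpa using hj)]
  have habove : ∑ j ∈ Ico (i + 1 : ℕ) n, arcWeight y z (i : ℕ) j * F n j
      = y * (G n n - G n ((i : ℕ) + 1)) := by
    rw [← Nat.cast_succ, hFG, hFG, ← sum_Ico_eq_sub _ hi, mul_sum]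
    refine sum_congr rfl fun j hj => ?_
    rw [arcWeight, if_pos (by simp at hj; omega)]
  rw [hbelow, habove, leafWeight, arcWeight, if_neg (lt_irrefl _), if_neg (lt_irrefl _), one_mul]

theorem leafWeight_neg {F G F' G' : ℚ → ℚ → ℚ} {y z : ℚ} (hu : y + z - 1 ≠ 0)
    (hF : F ∈ polyFun₂) (hG : G ∈ polyFun₂) (hFG : IsPartialSum F G)
    (hF' : F' ∈ polyFun₂) (hG' : G' ∈ polyFun₂) (hFG' : IsPartialSum F' G')
    (hFF' : IsReflection F F') (a b : ℚ) :
    leafWeight y z F G (-a) (-1 - b)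
      = -(y + z - 1) * leafWeight (y / (y + z - 1)) (z / (y + z - 1)) F' G' a b := by
  have hGG' := hFG.apply_neg_neg hF hG hG' hFG' hFF'
  simp only [leafWeight]
  rw [hFF', show -1 - b + 1 = -b by ring, show -1 - b = -(b + 1) by ring, hGG', hGG', hGG',
    hFG'.add_one hF' hG']
  field_simp
  ring

theorem Fintype.card_subtype_ne_add_one {α : Type*} [Fintype α] [DecidableEq α] (a : α) :
    Fintype.card {b // b ≠ a} + 1 = Fintype.card α := by
  rw [Fintype.card_subtype_compl, Fintype.card_subtype_eq]
  have := Fintype.card_pos_iff.mpr ⟨a⟩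
  omega

section Forest

variable {V A : Type} {s t : A → V}

def Joins (s t : A → V) (a : A) (x x' : V) : Prop :=
  (s a = x ∧ t a = x') ∨ (t a = x ∧ s a = x')

theorem Joins.symm {a : A} {x x' : V} (h : Joins s t a x x') : Joins s t a x' x :=
  (Or.symm h).imp And.symm And.symm

theorem Joins.src_or_tgt {a : A} {x x' : V} (h : Joins s t a x x') : s a = x ∨ t a = x := by
  rcases h with ⟨h, -⟩ | ⟨h, -⟩ <;> simp [h]

theorem Joins.eq_or_eq {a : A} {x x' y : V} (h : Joins s t a x x') (hy : s a = y ∨ t a = y) :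
    y = x ∨ y = x' := by
  rcases h with ⟨rfl, rfl⟩ | ⟨rfl, rfl⟩ <;> tauto

theorem UnderlyingHasCycle.swap (h : UnderlyingHasCycle s t) : UnderlyingHasCycle t s := by
  obtain ⟨n, hn, e, v, he, hjoin⟩ := h
  exact ⟨n, hn, e, v, he, fun i => (hjoin i).symm⟩

theorem UnderlyingHasCycle.of_map {V' A' : Type} {s' t' : A' → V'} (φ : A' → A)
    (hφ : Function.Injective φ) (ψ : V' → V) (hs : ∀ b, s (φ b) = ψ (s' b))
    (ht : ∀ b, t (φ b) = ψ (t' b)) (h : UnderlyingHasCycle s' t') : UnderlyingHasCycle s t := by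
  obtain ⟨n, hn, e, v, he, hjoin⟩ := h
  refine ⟨n, hn, φ ∘ e, ψ ∘ v, hφ.comp he, fun i => ?_⟩
  simp only [Function.comp_apply, hs, ht]
  rcases hjoin i with ⟨h₁, h₂⟩ | ⟨h₁, h₂⟩
  · exact Or.inl ⟨congrArg ψ h₁, congrArg ψ h₂⟩
  · exact Or.inr ⟨congrArg ψ h₁, congrArg ψ h₂⟩

theorem underlyingHasCycle_of_loop {a : A} (h : s a = t a) : UnderlyingHasCycle s t :=
  ⟨1, one_pos, fun _ => a, fun _ => s a, fun _ _ _ => Subsingleton.elim _ _,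
    fun _ => Or.inl ⟨rfl, h.symm⟩⟩

structure IsTrail (s t : A → V) (N : ℕ) (e : ℕ → A) (v : ℕ → V) : Prop where
  joins : ∀ i < N, Joins s t (e i) (v i) (v (i + 1))
  injOn : Set.InjOn e (Set.Iio N)

namespace IsTrail

variable {N : ℕ} {e : ℕ → A} {v : ℕ → V}

theorem le_card [Fintype A] (h : IsTrail s t N e v) : N ≤ Fintype.card A := by
  simpa using Fintype.card_le_of_injective (fun i : Fin N => e i)
    fun i j hij => Fin.ext (h.injOn i.isLt j.isLt hij)

theorem underlyingHasCycle (h : IsTrail s t N e v) {j : ℕ} (hj : j < N) (hv : v j = v N) :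
    UnderlyingHasCycle s t := by
  obtain ⟨m, rfl⟩ : ∃ m, N = j + m := ⟨N - j, by omega⟩
  have : NeZero m := ⟨by omega⟩
  refine ⟨m, by omega, fun i => e (j + i.val), fun i => v (j + i.val), fun i i' hii' => ?_,
    fun i => ?_⟩
  · have := h.injOn (by simp [ZMod.val_lt i]) (by simp [ZMod.val_lt i']) hii'
    exact ZMod.val_injective m (by omega)
  · have hnext : v (j + (i + 1).val) = v (j + i.val + 1) := by
      rw [ZMod.val_add, ZMod.val_one_eq_one_mod, Nat.add_mod_mod]
      by_cases hlt : i.val + 1 < m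
      · rw [Nat.mod_eq_of_lt hlt, add_assoc]
      · have : i.val + 1 = m := by have := ZMod.val_lt i; omega
        rw [this, Nat.mod_self, add_zero, hv, add_assoc, this]
    change Joins s t (e (j + i.val)) (v (j + i.val)) (v (j + (i + 1).val))
    rw [hnext]
    exact h.joins _ (by have := ZMod.val_lt i; omega)

theorem snoc (h : IsTrail s t N e v) {b : A} (hb : ∀ i < N, e i ≠ b) {x : V}
    (hbx : Joins s t b (v N) x) :
    IsTrail s t (N + 1) (Function.update e N b) (Function.update v (N + 1) x) := by
  constructor
  · intro i hi
    rcases (Nat.lt_succ_iff.mp hi).lt_or_eq with hi | rfl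
    · rw [Function.update_of_ne hi.ne, Function.update_of_ne (by omega : i ≠ N + 1),
        Function.update_of_ne (by omega : i + 1 ≠ N + 1)]
      exact h.joins i hi
    · simpa [Function.update] using hbx
  · intro i hi j hj hij
    simp only [Set.mem_Iio] at hi hj
    rcases (Nat.lt_succ_iff.mp hi).lt_or_eq with hi | rfl <;>
      rcases (Nat.lt_succ_iff.mp hj).lt_or_eq with hj | rfl
    · simp only [Function.update_of_ne hi.ne, Function.update_of_ne hj.ne] at hij
      exact h.injOn hi hj hij
    · exact absurd (by simpa [Function.update, hi.ne] using hij) (hb i hi)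
    · exact absurd (by simpa [Function.update, hj.ne] using hij.symm) (hb j hj)
    · rfl

end IsTrail

def IsLeafArc (s t : A → V) (a : A) : Prop :=
  s a ≠ t a ∧ (∀ b ≠ a, s b ≠ t a) ∧ ∀ b ≠ a, t b ≠ t a

theorem exists_isLeafArc [Fintype A] [Nonempty A] (hst : ¬ UnderlyingHasCycle s t) :
    ∃ a, IsLeafArc s t a ∨ IsLeafArc t s a := by
  -- Otherwise every trail extends or closes up into a cycle, so there are trails of any length.
  by_contra! hno
  have hnext {a : A} {x : V} (hx : s a = x ∨ t a = x) : ∃ b ≠ a, ∃ x', Joins s t b x x' := by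
    have hloop : s a ≠ t a := fun h => hst (underlyingHasCycle_of_loop h)
    by_contra! hcon
    rcases hx with rfl | rfl
    · exact (hno a).2 ⟨hloop.symm, fun b hb htb => hcon b hb (s b) (Or.inr ⟨htb, rfl⟩),
        fun b hb hsb => hcon b hb (t b) (Or.inl ⟨hsb, rfl⟩)⟩
    · exact (hno a).1 ⟨hloop, fun b hb hsb => hcon b hb (t b) (Or.inl ⟨hsb, rfl⟩),
        fun b hb htb => hcon b hb (s b) (Or.inr ⟨htb, rfl⟩)⟩
  have htrail (N : ℕ) : ∃ e v, IsTrail s t (N + 1) e v := by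
    induction N with
    | zero =>
      obtain ⟨a⟩ := ‹Nonempty A›
      refine ⟨fun _ => a, fun i => if i = 0 then s a else t a, fun i hi => ?_,
        fun i hi j hj _ => ?_⟩
      · obtain rfl : i = 0 := by omega
        exact Or.inl ⟨rfl, rfl⟩
      · simp_all
    | succ N ih =>
      obtain ⟨e, v, h⟩ := ih
      obtain ⟨b, hb, x, hbx⟩ := hnext (h.joins N N.lt_succ_self).symm.src_or_tgt
      by_cases hused : ∃ i < N + 1, e i = b
      · obtain ⟨i, hi, rfl⟩ := hused
        have hiN : i < N := lt_of_le_of_ne (Nat.lt_succ_iff.mp hi) (by rintro rfl; exact hb rfl)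
        rcases (h.joins i hi).eq_or_eq hbx.src_or_tgt with hv | hv
        · exact absurd (h.underlyingHasCycle hi hv.symm) hst
        · exact absurd (h.underlyingHasCycle (by omega) hv.symm) hst
      · simp only [not_exists, not_and] at hused
        exact ⟨_, _, h.snoc hused hbx⟩
  obtain ⟨e, v, h⟩ := htrail (Fintype.card A)
  exact absurd h.le_card (by omega)

end Forest

section ColorSum

variable {V A : Type} [Fintype V] [DecidableEq V] [Fintype A]

def weightedColorSum (s t : A → V) (y z : ℚ) (P : V → ℚ → ℚ → ℚ) (n : ℕ) : ℚ :=
  ∑ f : V → Fin n, (∏ a, arcWeight y z (f (s a)) (f (t a))) * ∏ v, P v n (f v)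

theorem weightedColorSum_one (s t : A → V) (y z : ℚ) (n : ℕ) :
    weightedColorSum s t y z 1 n = colorSum V A s t n y z := by
  refine sum_congr rfl fun f _ => ?_
  simp only [Pi.one_apply, prod_const_one, mul_one, arcWeight_eq_pow_mul_pow, prod_mul_distrib,
    prod_pow_eq_pow_sum, card_filter]

theorem weightedColorSum_swap (s t : A → V) (y z : ℚ) (P : V → ℚ → ℚ → ℚ) (n : ℕ) :
    weightedColorSum t s z y P n = weightedColorSum s t y z P n := by
  simp only [weightedColorSum, arcWeight_swap]

theorem weightedColorSum_of_isEmpty [IsEmpty A] (s t : A → V) (y z : ℚ)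
    (P : V → ℚ → ℚ → ℚ) (n : ℕ) :
    weightedColorSum s t y z P n = ∏ v, ∑ k ∈ range n, P v n k := by
  simp only [weightedColorSum, univ_eq_empty, prod_empty, one_mul,
    ← Fin.sum_univ_eq_sum_range (fun k => P _ n k), Fintype.prod_sum]

theorem prod_update_apply (P : V → ℚ → ℚ → ℚ) (v : V) (H : ℚ → ℚ → ℚ) (n : ℕ) (f : V → Fin n) :
    ∏ w, Function.update P v H w n (f w) = H n (f v) * ∏ w ∈ univ.erase v, P w n (f w) := by
  rw [← mul_prod_erase _ _ (mem_univ v), Function.update_self]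
  congr 1
  exact prod_congr rfl fun w hw => by rw [Function.update_of_ne (ne_of_mem_erase hw)]

theorem weightedColorSum_update_smul (s t : A → V) (y z : ℚ) (P : V → ℚ → ℚ → ℚ) (v : V)
    (c : ℚ) (H : ℚ → ℚ → ℚ) (n : ℕ) :
    weightedColorSum s t y z (Function.update P v (c • H)) n
      = c * weightedColorSum s t y z (Function.update P v H) n := by
  simp only [weightedColorSum, prod_update_apply, mul_sum, Pi.smul_apply, smul_eq_mul]
  refine sum_congr rfl fun f _ => by ring

theorem weightedColorSum_eq_of_isLeafArc [DecidableEq A] {s t : A → V} {a₀ : A}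
    (ha : IsLeafArc s t a₀) {P : V → ℚ → ℚ → ℚ} {G : ℚ → ℚ → ℚ}
    (hG : IsPartialSum (P (t a₀)) G) (y z : ℚ) (n : ℕ) :
    weightedColorSum s t y z P n =
      weightedColorSum (Subtype.map s ha.2.1) (Subtype.map t ha.2.2) y z
        (Function.update (fun w => P w) (⟨s a₀, ha.1⟩ : {w // w ≠ t a₀})
          (P (s a₀) * leafWeight y z (P (t a₀)) G)) n := by
  obtain ⟨hx, hs, ht⟩ := ha
  set p : {w // w ≠ t a₀} := ⟨s a₀, hx⟩
  let e := (Equiv.funSplitAt (t a₀) (Fin n)).symm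
  have he_leaf (c g) : e (c, g) (t a₀) = c := by simp [e, Equiv.funSplitAt_symm_apply]
  have he_ne (c g) (w : V) (hw : w ≠ t a₀) : e (c, g) w = g ⟨w, hw⟩ := by
    simp [e, Equiv.funSplitAt_symm_apply, hw]
  unfold weightedColorSum
  rw [← e.sum_comp, Fintype.sum_prod_type, sum_comm]
  refine sum_congr rfl fun g _ => ?_
  calc _ = ∑ c, (arcWeight y z (g p) c * P (t a₀) n c) *
        ((∏ b : {b // b ≠ a₀}, arcWeight y z (g (Subtype.map s hs b)) (g (Subtype.map t ht b))) *
          ∏ w : {w // w ≠ t a₀}, P w n (g w)) := by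
        refine sum_congr rfl fun c _ => ?_
        rw [Fintype.prod_eq_mul_prod_subtype_ne _ a₀, Fintype.prod_eq_mul_prod_subtype_ne _ (t a₀)]
        simp only [he_leaf, he_ne _ _ _ hx, fun b : {b // b ≠ a₀} => he_ne c g _ (hs b b.2),
          fun b : {b // b ≠ a₀} => he_ne c g _ (ht b b.2),
          fun w : {w // w ≠ t a₀} => he_ne c g _ w.2, Subtype.coe_eta, Subtype.map, p]
        ring
    _ = _ := by
        rw [← sum_mul, sum_arcWeight_mul hG, prod_update_apply,
          ← mul_prod_erase univ (fun w : {w // w ≠ t a₀} => P w n (g w)) (mem_univ p)]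
        simp only [Pi.mul_apply]
        ring

end ColorSum


section Reciprocity

variable {V A : Type} [Fintype V] [DecidableEq V] [Fintype A]

def HasReciprocity (s t : A → V) (y z : ℚ) (P Q : V → ℚ → ℚ → ℚ) : Prop :=
  ∃ Φ ∈ polyFun₁, ∃ Φ' ∈ polyFun₁,
    (∀ n : ℕ, Φ n = weightedColorSum s t y z P n) ∧
    (∀ n : ℕ, Φ' n = weightedColorSum s t (y / (y + z - 1)) (z / (y + z - 1)) Q n) ∧
    ∀ r, Φ (-r) = (-1) ^ Fintype.card V * (y + z - 1) ^ Fintype.card A * Φ' r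

theorem HasReciprocity.swap {s t : A → V} {y z : ℚ} {P Q : V → ℚ → ℚ → ℚ}
    (h : HasReciprocity t s z y P Q) : HasReciprocity s t y z P Q := by
  obtain ⟨Φ, hΦ, Φ', hΦ', hΦP, hΦQ, hrec⟩ := h
  refine ⟨Φ, hΦ, Φ', hΦ', fun n => ?_, fun n => ?_, fun r => ?_⟩
  · rw [hΦP, weightedColorSum_swap]
  · rw [hΦQ, add_comm z y, weightedColorSum_swap]
  · rw [hrec, add_comm z y]

theorem hasReciprocity_of_isEmpty [IsEmpty A] (s t : A → V) (y z : ℚ) {P Q : V → ℚ → ℚ → ℚ}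
    (hP : ∀ v, P v ∈ polyFun₂) (hQ : ∀ v, Q v ∈ polyFun₂) (hPQ : ∀ v, IsReflection (P v) (Q v)) :
    HasReciprocity s t y z P Q := by
  choose G hG hPG using fun v => polyFun₂.exists_isPartialSum (hP v)
  choose G' hG' hQG' using fun v => polyFun₂.exists_isPartialSum (hQ v)
  have hdiag {H : V → ℚ → ℚ → ℚ} (hH : ∀ v, H v ∈ polyFun₂) :
      (fun r => ∏ v, H v r r) ∈ polyFun₁ := by
    convert prod_mem (t := univ) fun v _ =>
      polyFun₂.comp_mem_polyFun₁ (hH v) polyFun₁.id_mem polyFun₁.id_mem using 1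
    ext r
    simp [Finset.prod_apply]
  refine ⟨fun r => ∏ v, G v r r, hdiag hG, fun r => ∏ v, G' v r r, hdiag hG', fun n => ?_,
    fun n => ?_, fun r => ?_⟩
  · rw [weightedColorSum_of_isEmpty]
    exact prod_congr rfl fun v _ => hPG v n n
  · rw [weightedColorSum_of_isEmpty]
    exact prod_congr rfl fun v _ => hQG' v n n
  · simp only [Fintype.card_eq_zero, pow_zero, mul_one,
      fun v => (hPG v).apply_neg_neg (hP v) (hG v) (hG' v) (hQG' v) (hPQ v), prod_neg, card_univ]

theorem HasReciprocity.of_isLeafArc [DecidableEq A] {s t : A → V} {a₀ : A} (ha : IsLeafArc s t a₀)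
    {y z : ℚ} (hu : y + z - 1 ≠ 0) {P Q : V → ℚ → ℚ → ℚ}
    (hP : ∀ v, P v ∈ polyFun₂) (hQ : ∀ v, Q v ∈ polyFun₂) (hPQ : ∀ v, IsReflection (P v) (Q v))
    (ih : ∀ P' Q' : {w // w ≠ t a₀} → ℚ → ℚ → ℚ, (∀ w, P' w ∈ polyFun₂) →
      (∀ w, Q' w ∈ polyFun₂) → (∀ w, IsReflection (P' w) (Q' w)) →
      HasReciprocity (Subtype.map s ha.2.1) (Subtype.map t ha.2.2) y z P' Q') :
    HasReciprocity s t y z P Q := by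
  have ⟨hx, hs, ht⟩ := ha
  set u := y + z - 1
  set p : {w // w ≠ t a₀} := ⟨s a₀, hx⟩
  obtain ⟨G, hG, hPG⟩ := polyFun₂.exists_isPartialSum (hP (t a₀))
  obtain ⟨G', hG', hQG'⟩ := polyFun₂.exists_isPartialSum (hQ (t a₀))
  set R := Q (s a₀) * leafWeight (y / u) (z / u) (Q (t a₀)) G'
  set P' := Function.update (fun w : {w // w ≠ t a₀} => P w) p
    (P (s a₀) * leafWeight y z (P (t a₀)) G)
  -- the factor `-u` produced by `leafWeight_neg` is divided out of `Φ'` below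
  set Q' := Function.update (fun w : {w // w ≠ t a₀} => Q w) p ((-u) • R)
  have hP' (w) : P' w ∈ polyFun₂ := by
    rcases eq_or_ne w p with rfl | hw
    · simpa [P'] using mul_mem (hP _) (leafWeight_mem (hP _) hG y z)
    · simpa [P', hw] using hP w
  have hQ' (w) : Q' w ∈ polyFun₂ := by
    rcases eq_or_ne w p with rfl | hw
    · simpa [Q'] using Subalgebra.smul_mem _ (mul_mem (hQ _) (leafWeight_mem (hQ _) hG' _ _)) (-u)
    · simpa [Q', hw] using hQ w
  have hP'Q' (w) : IsReflection (P' w) (Q' w) := by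
    rcases eq_or_ne w p with rfl | hw
    · intro a b
      simp only [P', Q', Function.update_self, Pi.mul_apply, Pi.smul_apply, smul_eq_mul, R,
        hPQ _ a b, leafWeight_neg hu (hP _) hG hPG (hQ _) hG' hQG' (hPQ _) a b]
      ring
    · simpa [P', Q', hw] using hPQ w
  obtain ⟨Φ, hΦ, Φ', hΦ', hΦP, hΦQ, hrec⟩ := ih P' Q' hP' hQ' hP'Q'
  refine ⟨Φ, hΦ, (-u)⁻¹ • Φ', Subalgebra.smul_mem _ hΦ' _, fun n => ?_, fun n => ?_, fun r => ?_⟩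
  · rw [hΦP, weightedColorSum_eq_of_isLeafArc ha hPG]
  · rw [Pi.smul_apply, hΦQ, weightedColorSum_update_smul,
      ← weightedColorSum_eq_of_isLeafArc ha hQG', smul_eq_mul,
      inv_mul_cancel_left₀ (neg_ne_zero.mpr hu)]
  · rw [hrec, Pi.smul_apply, smul_eq_mul, ← Fintype.card_subtype_ne_add_one (t a₀),
      ← Fintype.card_subtype_ne_add_one a₀]
    field_simp
    ring

end Reciprocity

theorem hasReciprocity_of_forest {V A : Type} [Fintype V] [DecidableEq V] [Fintype A]
    {s t : A → V} (hst : ¬ UnderlyingHasCycle s t) {y z : ℚ} (hu : y + z - 1 ≠ 0)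
    {P Q : V → ℚ → ℚ → ℚ} (hP : ∀ v, P v ∈ polyFun₂) (hQ : ∀ v, Q v ∈ polyFun₂)
    (hPQ : ∀ v, IsReflection (P v) (Q v)) : HasReciprocity s t y z P Q := by
  classical
  induction hA : Fintype.card A generalizing V A y z with
  | zero =>
    have := Fintype.card_eq_zero_iff.mp hA
    exact hasReciprocity_of_isEmpty s t y z hP hQ hPQ
  | succ m ih =>
    have : Nonempty A := Fintype.card_pos_iff.mp (by omega)
    have hcard (a₀ : A) : Fintype.card {b // b ≠ a₀} = m := by
      have := Fintype.card_subtype_ne_add_one a₀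
      omega
    obtain ⟨a₀, ha | ha⟩ := exists_isLeafArc hst
    · refine HasReciprocity.of_isLeafArc ha hu hP hQ hPQ fun P' Q' hP' hQ' hPQ' => ?_
      refine ih (fun h => hst (h.of_map Subtype.val Subtype.val_injective Subtype.val
        (fun _ => rfl) (fun _ => rfl))) hu hP' hQ' hPQ' (hcard a₀)
    · refine (HasReciprocity.of_isLeafArc ha (by rwa [add_comm]) hP hQ hPQ
        fun P' Q' hP' hQ' hPQ' => ?_).swap
      refine ih (fun h => hst (h.swap.of_map Subtype.val Subtype.val_injective Subtype.val
        (fun _ => rfl) (fun _ => rfl))) (by rwa [add_comm]) hP' hQ' hPQ' (hcard a₀)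

/-- if the graph underlying a digraph `D = (V,A)` is a forest, then,
as an identity of rational functions (stated for all rationals `q, y, z` with
`y + z − 1 ≠ 0`):
`B_D(−q, y, z) = (−1)^{|V|} (y+z−1)^{|A|} B_D(q, y/(y+z−1), z/(y+z−1))`. -/
theorem forest_B_symmetry
    (V A : Type) [Fintype V] [DecidableEq V] [Fintype A]
    (s t : A → V)
    (hforest : ¬ UnderlyingHasCycle s t)
    (B : MvPolynomial (Fin 3) ℚ)
    (hB : ∀ q : ℕ, 0 < q → ∀ y z : ℚ,
      MvPolynomial.eval ![(q : ℚ), y, z] B = colorSum V A s t q y z) :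
    ∀ q y z : ℚ, y + z - 1 ≠ 0 →
      MvPolynomial.eval ![-q, y, z] B
      = (-1 : ℚ) ^ (Fintype.card V) * ((y + z - 1) ^ (Fintype.card A) *
          MvPolynomial.eval ![q, y / (y + z - 1), z / (y + z - 1)] B) := by
  intro q y z hu
  have hB_mem (c d : ℚ) : (fun r => MvPolynomial.eval ![r, c, d] B) ∈ polyFun₁ :=
    polyFun₁.mvPolynomial_eval_mem B fun i => by
      fin_cases i
      exacts [polyFun₁.id_mem, Subalgebra.algebraMap_mem _ c, Subalgebra.algebraMap_mem _ d]
  obtain ⟨Φ, hΦ, Φ', hΦ', hΦB, hΦ'B, hrec⟩ := hasReciprocity_of_forest hforest hu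
    (P := 1) (Q := 1) (fun _ => one_mem _) (fun _ => one_mem _) (fun _ _ _ => rfl)
  have hB₁ : (fun r => MvPolynomial.eval ![r, y, z] B) = Φ :=
    polyFun₁.eq_of_forall_pos_nat (hB_mem _ _) hΦ fun n hn => by
      rw [hB n hn, hΦB, weightedColorSum_one]
  have hB₂ : (fun r => MvPolynomial.eval ![r, y / (y + z - 1), z / (y + z - 1)] B) = Φ' :=
    polyFun₁.eq_of_forall_pos_nat (hB_mem _ _) hΦ' fun n hn => by
      rw [hB n hn, hΦ'B, weightedColorSum_one]
  rw [congrFun hB₁ (-q), hrec, ← congrFun hB₂ q]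
  ring
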